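/- Let L be a nonempty level datum whose largest level k₀ satisfies 1 < k₀ < 2, let ρ := Ram(L) and σ := k₀·ρ ∈ ℤ, and suppose σ − ρ does not divide σ. Then the largest level of the level datum S_∞(L) = {(ρ/(σ−ρ))·k : k ∈ L, (ρ/(σ−ρ))·k ∉ ℤ} equals σ/(σ−ρ) and is strictly greater than 2; in particular S_∞(L) is a fixed point of S_∞. -/

import Mathlib

open Finset

/-- The ramification order of a level datum: the least common denominator of its
elements, i.e. the lcm of the denominators (`ram ∅ = 1`). -/
def ram (L : Finset ℚ) : ℕ := L.lcm Rat.den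

/-- The least common denominator `d` of the "initial segment" of `L` consisting of the
elements `≥ k` (the elements come in decreasing order `k₀ > k₁ > ⋯`). -/
def segLcm (L : Finset ℚ) (k : ℚ) : ℕ := (L.filter (fun x => k ≤ x)).lcm Rat.den

/-- A level datum: a finite set of positive rationals such that the least common
denominators `d₀, d₁, …` of the initial segments (for the decreasing order) are all `≥ 2`
and form a strictly increasing sequence.  (Since the `d_j` are increasing, requiring
`d_j ≥ 2` for all `j` is equivalent to `d₀ ≥ 2`, i.e. to the largest element not being
an integer.) -/
def IsLevelDatum (L : Finset ℚ) : Prop :=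
  (∀ k ∈ L, 0 < k) ∧
  (∀ k ∈ L, 2 ≤ segLcm L k) ∧
  (∀ k ∈ L, ∀ k' ∈ L, k' < k → segLcm L k < segLcm L k')

/-- The largest level of `L` (junk value `0` for `L = ∅`). -/
def maxLevel (L : Finset ℚ) : ℚ := WithBot.unbotD 0 L.max

/-- The numerator `s(k) := k · Ram(L) ∈ ℤ` of a level `k` of `L`. -/
def numer (L : Finset ℚ) (k : ℚ) : ℤ := (k * (ram L : ℚ)).num

/-- `σ := k₀ · Ram(L) ∈ ℤ`, the numerator of the largest level. -/
def sigma0 (L : Finset ℚ) : ℤ := numer L (maxLevel L)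

/-- `gcd(s(x) for x ∈ s, Ram L)` : the gcd of `Ram L` together with the numerators of the
elements of a subset `s ⊆ L`. -/
def gSeg (L : Finset ℚ) (s : Finset ℚ) : ℕ :=
  Nat.gcd (ram L) (s.gcd (fun x => (numer L x).natAbs))

/-- The quantity
`B_L = (r − (s₀,r))·s₀ + Σᵢ ((s₀,…,s_{i−1},r) − (s₀,…,s_i,r))·s_i − r² + 1`
(`B_∅ = 0`), equal to the dimension of the elementary wild character variety. -/
def B (L : Finset ℚ) : ℤ :=
  (∑ k ∈ L, ((gSeg L (L.filter (fun x => k < x)) : ℤ)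
      - (gSeg L (L.filter (fun x => k ≤ x)) : ℤ)) * numer L k)
    - (ram L : ℤ) ^ 2 + 1

/-- A level datum is locally minimal at infinity if it is empty, or its largest level is
`< 1` or `> 2`. -/
def LocallyMinimal (L : Finset ℚ) : Prop :=
  L = ∅ ∨ maxLevel L < 1 ∨ 2 < maxLevel L

/-- Rescaling of a level datum by a factor `c`, removing the integer elements. -/
def rescale (L : Finset ℚ) (c : ℚ) : Finset ℚ :=
  (L.image (fun k => c * k)).filter (fun x => x.den ≠ 1)

/-- The local simplification map `S_∞` on level data: if the largest level `k₀` satisfies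
`1 < k₀ < 2`, rescale all the levels by `ρ/(σ−ρ)` (where `ρ = Ram L`, `σ = k₀·ρ`) and
remove the integer levels; otherwise do nothing. -/
def Sinf (L : Finset ℚ) : Finset ℚ :=
  if 1 < maxLevel L ∧ maxLevel L < 2 then
    rescale L ((ram L : ℚ) / ((sigma0 L : ℚ) - (ram L : ℚ)))
  else L


lemma maxLevel_eq_max' {L : Finset ℚ} (hne : L.Nonempty) : maxLevel L = L.max' hne := by
  rw [maxLevel, ← coe_max' hne, WithBot.unbotD_coe]

lemma maxLevel_mem {L : Finset ℚ} (hne : L.Nonempty) : maxLevel L ∈ L :=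
  maxLevel_eq_max' hne ▸ max'_mem L hne

lemma le_maxLevel {L : Finset ℚ} {x : ℚ} (hx : x ∈ L) : x ≤ maxLevel L :=
  maxLevel_eq_max' ⟨x, hx⟩ ▸ le_max' L x hx

lemma maxLevel_eq_of_mem_of_forall_le {L : Finset ℚ} {a : ℚ} (ha : a ∈ L)
    (hle : ∀ x ∈ L, x ≤ a) : maxLevel L = a :=
  le_antisymm (hle _ (maxLevel_mem ⟨a, ha⟩)) (le_maxLevel ha)

lemma ram_pos (L : Finset ℚ) : 0 < ram L :=
  Nat.pos_of_ne_zero fun h => by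
    obtain ⟨x, -, hx⟩ := lcm_eq_zero_iff.mp h
    exact x.den_nz hx

lemma numer_eq_mul_ram {L : Finset ℚ} {k : ℚ} (hk : k ∈ L) :
    (numer L k : ℚ) = k * ram L := by
  obtain ⟨m, hm⟩ : k.den ∣ ram L := dvd_lcm hk
  have hint : k * ram L = ((k.num * m : ℤ) : ℚ) := by
    rw [hm]
    push_cast
    rw [← mul_assoc, Rat.mul_den_eq_num]
  rw [numer, hint, Rat.num_intCast]

lemma maxLevel_rescale {L : Finset ℚ} {c : ℚ} (hne : L.Nonempty) (hc : 0 ≤ c)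
    (hden : (c * maxLevel L).den ≠ 1) : maxLevel (rescale L c) = c * maxLevel L := by
  refine maxLevel_eq_of_mem_of_forall_le ?_ fun x hx => ?_
  · exact mem_filter.mpr ⟨mem_image_of_mem _ (maxLevel_mem hne), hden⟩
  · obtain ⟨⟨k, hk, rfl⟩, -⟩ := mem_filter.mp hx |>.imp_left mem_image.mp
    exact mul_le_mul_of_nonneg_left (le_maxLevel hk) hc

lemma Sinf_of_one_lt_of_lt_two {L : Finset ℚ} (h1 : 1 < maxLevel L) (h2 : maxLevel L < 2) :
    Sinf L = rescale L ((ram L : ℚ) / ((sigma0 L : ℚ) - (ram L : ℚ))) :=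
  if_pos ⟨h1, h2⟩

lemma Sinf_of_two_lt {L : Finset ℚ} (h : 2 < maxLevel L) : Sinf L = L :=
  if_neg fun h' => h'.2.not_gt h

theorem stmt_10_general (L : Finset ℚ) (hne : L.Nonempty)
    (h1 : 1 < maxLevel L) (h2 : maxLevel L < 2)
    (hdvd : ¬ (sigma0 L - (ram L : ℤ)) ∣ sigma0 L) :
    maxLevel (Sinf L) = (sigma0 L : ℚ) / ((sigma0 L : ℚ) - (ram L : ℚ)) ∧
    2 < maxLevel (Sinf L) ∧
    Sinf (Sinf L) = Sinf L := by
  have hρ : (0 : ℚ) < ram L := mod_cast ram_pos L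
  have hσ : (sigma0 L : ℚ) = maxLevel L * ram L := numer_eq_mul_ram (maxLevel_mem hne)
  have hσρ : (0 : ℚ) < sigma0 L - ram L := by rw [hσ]; nlinarith
  have hscale : (ram L : ℚ) / (sigma0 L - ram L) * maxLevel L =
      (sigma0 L : ℚ) / (sigma0 L - ram L) := by
    rw [hσ]; field_simp
  have hden : ((sigma0 L : ℚ) / (sigma0 L - ram L)).den ≠ 1 := by
    have := Rat.den_div_intCast_eq_one_iff (sigma0 L) (sigma0 L - ram L) (by exact_mod_cast hσρ.ne')
    push_cast at this
    exact this.not.mpr hdvd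
  have hmax : maxLevel (Sinf L) = (sigma0 L : ℚ) / (sigma0 L - ram L) := by
    rw [Sinf_of_one_lt_of_lt_two h1 h2, maxLevel_rescale hne (by positivity) (hscale ▸ hden),
      hscale]
  have htwo : 2 < maxLevel (Sinf L) := by
    rw [hmax, lt_div_iff₀ hσρ, hσ]
    nlinarith
  exact ⟨hmax, htwo, Sinf_of_two_lt htwo⟩

/-- if the largest level `k₀` of a nonempty level datum `L` satisfies
`1 < k₀ < 2`, with `ρ = Ram(L)`, `σ = k₀·ρ ∈ ℤ`, and `σ − ρ` does not divide `σ`, then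
the largest level of `S_∞(L)` equals `σ/(σ−ρ) > 2`; in particular `S_∞(L)` is a fixed
point of `S_∞`. -/
theorem stmt_10 (L : Finset ℚ) (hL : IsLevelDatum L) (hne : L.Nonempty)
    (h1 : 1 < maxLevel L) (h2 : maxLevel L < 2)
    (hdvd : ¬ (sigma0 L - (ram L : ℤ)) ∣ sigma0 L) :
    maxLevel (Sinf L) = (sigma0 L : ℚ) / ((sigma0 L : ℚ) - (ram L : ℚ)) ∧
    2 < maxLevel (Sinf L) ∧
    Sinf (Sinf L) = Sinf L :=
  stmt_10_general L hne h1 h2 hdvd
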